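/- arXiv:2512.14983 — 4 statements merged into one kernel-verified Lean document; each statement's English description precedes it below -/
import Mathlib

section
/- Let X ~ Poisson(λ) with λ > 0. Then the Gini coefficient of X equals exp(-2λ)[I₀(2λ) + I₁(2λ)], where I₀ and I₁ are the modified Bessel functions of the first kind. -/
/-!
With `p_k = e^{-λ} λ^k / k!`, independence gives
`E|X₁ - X₂| = ∑_{j,k} |j - k| p_j p_k = 2 ∑_d d ∑_k p_{k+d} p_k` (rearranged in `ℝ≥0∞`, where no
summability is needed), and the inner sum is `e^{-2λ} I_d(2λ)`. The recurrence
`λ I_d(2λ) = (d + 1) I_{d+1}(2λ) + λ I_{d+2}(2λ)` makes `∑_{d ≤ n} d I_d(2λ)` telescope to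
`λ (I_0 + I_1 - I_n - I_{n+1})(2λ)`, and `I_n(2λ) → 0`.
-/

open MeasureTheory

/-- Modified Bessel function of the first kind of (natural) order `ν`. -/
noncomputable def besselI (ν : ℕ) (x : ℝ) : ℝ :=
  ∑' m : ℕ, (x / 2) ^ (2 * m + ν) / ((Nat.factorial m) * Real.Gamma (m + ν + 1))

open Filter Finset Topology
open scoped ENNReal Nat

noncomputable def besselITerm (ν : ℕ) (x : ℝ) (k : ℕ) : ℝ :=
  x ^ (2 * k + ν) / (k ! * (k + ν)! : ℝ)

section Bessel

variable (ν : ℕ) (x : ℝ)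

theorem besselI_two_mul : besselI ν (2 * x) = ∑' k, besselITerm ν x k := by
  refine tsum_congr fun k => ?_
  rw [besselITerm, mul_div_cancel_left₀ x two_ne_zero,
    show (k : ℝ) + ν + 1 = ((k + ν : ℕ) : ℝ) + 1 by push_cast; ring, Real.Gamma_nat_eq_factorial]

theorem abs_besselITerm_le (k : ℕ) :
    |besselITerm ν x k| ≤ |x| ^ ν / ν ! * ((x ^ 2) ^ k / k !) := by
  have hfac : (ν ! : ℝ) ≤ (k + ν)! := by exact_mod_cast Nat.factorial_le (Nat.le_add_left ν k)
  rw [besselITerm, abs_div, abs_pow, abs_of_pos (by positivity : (0 : ℝ) < k ! * (k + ν)!),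
    div_mul_div_comm, ← sq_abs, ← pow_mul, ← pow_add, add_comm ν, mul_comm (ν ! : ℝ)]
  gcongr

theorem summable_besselITerm : Summable (besselITerm ν x) :=
  .of_norm_bounded ((Real.summable_pow_div_factorial (x ^ 2)).mul_left _) (abs_besselITerm_le ν x)

theorem abs_besselI_two_mul_le :
    |besselI ν (2 * x)| ≤ |x| ^ ν / ν ! * ∑' k : ℕ, (x ^ 2) ^ k / k ! := by
  rw [besselI_two_mul]
  exact tsum_of_norm_bounded (f := besselITerm ν x)
    ((Real.summable_pow_div_factorial _).hasSum.mul_left _) (abs_besselITerm_le ν x)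

theorem tendsto_besselI_two_mul_atTop_nhds_zero :
    Tendsto (fun ν => besselI ν (2 * x)) atTop (𝓝 0) := by
  refine squeeze_zero_norm (fun ν => abs_besselI_two_mul_le ν x) ?_
  simpa using (Real.summable_pow_div_factorial |x|).tendsto_atTop_zero.mul_const _

theorem besselI_two_mul_nonneg {x : ℝ} (hx : 0 ≤ x) : 0 ≤ besselI ν (2 * x) := by
  rw [besselI_two_mul]
  exact tsum_nonneg fun k => by unfold besselITerm; positivity

theorem succ_mul_besselITerm_succ (k : ℕ) :
    ((k + 1 : ℕ) : ℝ) * besselITerm (ν + 1) x (k + 1) = x * besselITerm (ν + 2) x k := by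
  unfold besselITerm
  rw [show 2 * (k + 1) + (ν + 1) = 2 * k + (ν + 2) + 1 by ring,
    show k + 1 + (ν + 1) = k + (ν + 2) by ring, Nat.factorial_succ, pow_succ]
  push_cast
  field_simp

theorem add_mul_besselITerm_succ (k : ℕ) :
    (ν + 1 + k : ℝ) * besselITerm (ν + 1) x k = x * besselITerm ν x k := by
  unfold besselITerm
  rw [show 2 * k + (ν + 1) = 2 * k + ν + 1 by ring, show k + (ν + 1) = k + ν + 1 by ring,
    Nat.factorial_succ, pow_succ]
  push_cast
  field_simp
  ring

theorem besselI_two_mul_recurrence :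
    x * besselI ν (2 * x) = (ν + 1) * besselI (ν + 1) (2 * x) + x * besselI (ν + 2) (2 * x) := by
  set g : ℕ → ℝ := fun k => k * besselITerm (ν + 1) x k
  have hshift : Summable fun k => g (k + 1) := by
    simpa only [g, succ_mul_besselITerm_succ] using (summable_besselITerm (ν + 2) x).mul_left x
  have htail : x * besselI (ν + 2) (2 * x) = ∑' k, g k := by
    rw [tsum_eq_zero_add' hshift, besselI_two_mul, ← tsum_mul_left]
    simp only [g, succ_mul_besselITerm_succ, Nat.cast_zero, zero_mul, zero_add]
  rw [htail, besselI_two_mul, besselI_two_mul, ← tsum_mul_left, ← tsum_mul_left,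
    ← ((summable_besselITerm (ν + 1) x).mul_left _).tsum_add ((summable_nat_add_iff 1).mp hshift)]
  simp_rw [← add_mul_besselITerm_succ]
  exact tsum_congr fun k => by ring

theorem sum_range_mul_besselI_two_mul (n : ℕ) :
    ∑ d ∈ range (n + 1), (d : ℝ) * besselI d (2 * x) =
      x * (besselI 0 (2 * x) + besselI 1 (2 * x) - besselI n (2 * x) -
        besselI (n + 1) (2 * x)) := by
  induction n with
  | zero => simp
  | succ n ih =>
    rw [sum_range_succ, ih]
    have := besselI_two_mul_recurrence n x
    push_cast
    linarith

theorem hasSum_mul_besselI_two_mul {x : ℝ} (hx : 0 ≤ x) :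
    HasSum (fun d : ℕ => d * besselI d (2 * x)) (x * (besselI 0 (2 * x) + besselI 1 (2 * x))) := by
  rw [hasSum_iff_tendsto_nat_of_nonneg
      (fun d => mul_nonneg d.cast_nonneg (besselI_two_mul_nonneg d hx)),
    ← tendsto_add_atTop_iff_nat 1]
  simp_rw [sum_range_mul_besselI_two_mul]
  have h := tendsto_besselI_two_mul_atTop_nhds_zero x
  simpa using (((tendsto_const_nhds.sub h).sub (h.comp (tendsto_add_atTop_nat 1))).const_mul x)

end Bessel

theorem ENNReal.ofReal_abs_natCast_sub (j k : ℕ) :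
    ENNReal.ofReal |(j : ℝ) - k| = ((j - k : ℕ) : ℝ≥0∞) + ((k - j : ℕ) : ℝ≥0∞) := by
  rcases le_total j k with h | h
  · rw [abs_sub_comm, abs_of_nonneg (by simpa using h), ← Nat.cast_sub h, ENNReal.ofReal_natCast,
      Nat.sub_eq_zero_of_le h, Nat.cast_zero, zero_add]
  · rw [abs_of_nonneg (by simpa using h), ← Nat.cast_sub h, ENNReal.ofReal_natCast,
      Nat.sub_eq_zero_of_le h, Nat.cast_zero, add_zero]

theorem ENNReal.tsum_tsub_mul (p q : ℕ → ℝ≥0∞) :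
    ∑' j, ∑' k, ((j - k : ℕ) : ℝ≥0∞) * (p j * q k) =
      ∑' d : ℕ, (d : ℝ≥0∞) * ∑' k, p (k + d) * q k := by
  have hshift (k : ℕ) : ∑' j, ((j - k : ℕ) : ℝ≥0∞) * (p j * q k) =
      ∑' d : ℕ, (d : ℝ≥0∞) * (p (k + d) * q k) := by
    rw [← (add_right_injective k).tsum_eq]
    · simp
    · intro j hj
      refine ⟨j - k, Nat.add_sub_of_le ?_⟩
      by_contra! h
      simp only [Function.mem_support, Nat.sub_eq_zero_of_le h.le, Nat.cast_zero, zero_mul,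
        ne_eq, not_true_eq_false] at hj
  rw [ENNReal.tsum_comm]
  simp_rw [hshift, ← ENNReal.tsum_mul_left]
  exact ENNReal.tsum_comm

theorem ENNReal.tsum_ofReal_abs_sub_mul (p : ℕ → ℝ≥0∞) :
    ∑' x : ℕ × ℕ, ENNReal.ofReal |(x.1 : ℝ) - x.2| * (p x.1 * p x.2) =
      2 * ∑' d : ℕ, (d : ℝ≥0∞) * ∑' k, p (k + d) * p k := by
  have hswap : ∑' j, ∑' k, ((k - j : ℕ) : ℝ≥0∞) * (p j * p k) =
      ∑' j, ∑' k, ((j - k : ℕ) : ℝ≥0∞) * (p j * p k) := by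
    rw [ENNReal.tsum_comm]
    simp_rw [mul_comm (p _) (p _)]
  rw [ENNReal.tsum_prod', ← ENNReal.tsum_tsub_mul]
  simp_rw [ENNReal.ofReal_abs_natCast_sub, add_mul, ENNReal.tsum_add, hswap, two_mul]

noncomputable def poissonProb (x : ℝ) (k : ℕ) : ℝ :=
  Real.exp (-x) * x ^ k / k !

theorem poissonProb_nonneg {x : ℝ} (hx : 0 ≤ x) (k : ℕ) : 0 ≤ poissonProb x k := by
  unfold poissonProb; positivity

theorem poissonProb_add_mul_poissonProb (x : ℝ) (d k : ℕ) :
    poissonProb x (k + d) * poissonProb x k = Real.exp (-2 * x) * besselITerm d x k := by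
  unfold poissonProb besselITerm
  rw [show -2 * x = -x + -x by ring, Real.exp_add, show 2 * k + d = k + d + k by ring, pow_add]
  field_simp
  ring

theorem tsum_ofReal_poissonProb_add_mul {x : ℝ} (hx : 0 ≤ x) (d : ℕ) :
    ∑' k, ENNReal.ofReal (poissonProb x (k + d)) * ENNReal.ofReal (poissonProb x k) =
      ENNReal.ofReal (Real.exp (-2 * x) * besselI d (2 * x)) := by
  have hnonneg (k : ℕ) : 0 ≤ Real.exp (-2 * x) * besselITerm d x k := by
    unfold besselITerm; positivity
  simp_rw [← ENNReal.ofReal_mul (poissonProb_nonneg hx _), poissonProb_add_mul_poissonProb]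
  rw [← ENNReal.ofReal_tsum_of_nonneg hnonneg ((summable_besselITerm d x).mul_left _),
    tsum_mul_left, besselI_two_mul]

theorem tsum_ofReal_abs_sub_mul_poissonProb {x : ℝ} (hx : 0 ≤ x) :
    ∑' p : ℕ × ℕ, ENNReal.ofReal |(p.1 : ℝ) - p.2| *
        (ENNReal.ofReal (poissonProb x p.1) * ENNReal.ofReal (poissonProb x p.2)) =
      ENNReal.ofReal (2 * x * Real.exp (-2 * x) * (besselI 0 (2 * x) + besselI 1 (2 * x))) := by
  have hsum : HasSum (fun d : ℕ => d * (Real.exp (-2 * x) * besselI d (2 * x)))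
      (Real.exp (-2 * x) * (x * (besselI 0 (2 * x) + besselI 1 (2 * x)))) := by
    simpa only [mul_left_comm] using (hasSum_mul_besselI_two_mul hx).mul_left (Real.exp (-2 * x))
  refine (ENNReal.tsum_ofReal_abs_sub_mul fun k => ENNReal.ofReal (poissonProb x k)).trans ?_
  simp_rw [tsum_ofReal_poissonProb_add_mul hx, ← ENNReal.ofReal_natCast,
    ← ENNReal.ofReal_mul (Nat.cast_nonneg _)]
  rw [← ENNReal.ofReal_tsum_of_nonneg
      (fun d => mul_nonneg d.cast_nonneg (by have := besselI_two_mul_nonneg d hx; positivity))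
      hsum.summable, hsum.tsum_eq, ← ENNReal.ofReal_ofNat 2, ← ENNReal.ofReal_mul zero_le_two]
  congr 1
  ring

theorem ProbabilityTheory.IndepFun.lintegral_comp_eq_tsum {Ω α β : Type*} [MeasurableSpace Ω]
    {μ : Measure Ω} [MeasurableSpace α] [MeasurableSingletonClass α] [Countable α]
    [MeasurableSpace β] [MeasurableSingletonClass β] [Countable β] {X : Ω → α} {Y : Ω → β}
    (hXY : IndepFun X Y μ) (hX : Measurable X) (hY : Measurable Y) (f : α × β → ℝ≥0∞) :
    ∫⁻ ω, f (X ω, Y ω) ∂μ = ∑' p, f p * (μ {ω | X ω = p.1} * μ {ω | Y ω = p.2}) := by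
  rw [← lintegral_map (measurable_of_countable f) (hX.prodMk hY), lintegral_countable']
  refine tsum_congr fun ⟨a, b⟩ => ?_
  rw [Measure.map_apply (hX.prodMk hY) (measurableSet_singleton _), ← Set.singleton_prod_singleton,
    Set.mk_preimage_prod, hXY.measure_inter_preimage_eq_mul _ _ (measurableSet_singleton _)
      (measurableSet_singleton _)]
  rfl

theorem gini_poisson_general
    {Ω : Type*} [MeasurableSpace Ω] (ℙ : Measure Ω)
    (lam : ℝ) (hlam : 0 < lam)
    (X₁ X₂ : Ω → ℕ) (hX₁ : Measurable X₁) (hX₂ : Measurable X₂)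
    (hd₁ : ∀ k : ℕ, ℙ {ω | X₁ ω = k}
        = ENNReal.ofReal (Real.exp (-lam) * lam ^ k / (Nat.factorial k)))
    (hd₂ : ∀ k : ℕ, ℙ {ω | X₂ ω = k}
        = ENNReal.ofReal (Real.exp (-lam) * lam ^ k / (Nat.factorial k)))
    (hindep : ProbabilityTheory.IndepFun X₁ X₂ ℙ) :
    (∫ ω, |(X₁ ω : ℝ) - (X₂ ω : ℝ)| ∂ℙ) / (2 * lam)
      = Real.exp (-2 * lam) * (besselI 0 (2 * lam) + besselI 1 (2 * lam)) := by
  have hmeas : AEStronglyMeasurable (fun ω => |(X₁ ω : ℝ) - (X₂ ω : ℝ)|) ℙ :=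
    (((measurable_of_countable _).comp hX₁).sub
      ((measurable_of_countable _).comp hX₂)).abs.aestronglyMeasurable
  have hlin : ∫⁻ ω, ENNReal.ofReal |(X₁ ω : ℝ) - (X₂ ω : ℝ)| ∂ℙ = ENNReal.ofReal
      (2 * lam * Real.exp (-2 * lam) * (besselI 0 (2 * lam) + besselI 1 (2 * lam))) := by
    rw [hindep.lintegral_comp_eq_tsum hX₁ hX₂ fun p => ENNReal.ofReal |(p.1 : ℝ) - p.2|]
    simp_rw [hd₁, hd₂]
    exact tsum_ofReal_abs_sub_mul_poissonProb hlam.le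
  have hI := add_nonneg (besselI_two_mul_nonneg 0 hlam.le) (besselI_two_mul_nonneg 1 hlam.le)
  rw [integral_eq_lintegral_of_nonneg_ae (.of_forall fun ω => abs_nonneg _) hmeas, hlin,
    ENNReal.toReal_ofReal (by positivity), mul_assoc, mul_div_cancel_left₀ _ (by positivity)]

theorem gini_poisson
    {Ω : Type*} [MeasurableSpace Ω] (ℙ : Measure Ω) [IsProbabilityMeasure ℙ]
    (lam : ℝ) (hlam : 0 < lam)
    (X₁ X₂ : Ω → ℕ) (hX₁ : Measurable X₁) (hX₂ : Measurable X₂)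
    (hd₁ : ∀ k : ℕ, ℙ {ω | X₁ ω = k}
        = ENNReal.ofReal (Real.exp (-lam) * lam ^ k / (Nat.factorial k)))
    (hd₂ : ∀ k : ℕ, ℙ {ω | X₂ ω = k}
        = ENNReal.ofReal (Real.exp (-lam) * lam ^ k / (Nat.factorial k)))
    (hindep : ProbabilityTheory.IndepFun X₁ X₂ ℙ) :
    (∫ ω, |(X₁ ω : ℝ) - (X₂ ω : ℝ)| ∂ℙ) / (2 * lam)
      = Real.exp (-2 * lam) * (besselI 0 (2 * lam) + besselI 1 (2 * lam)) :=
  gini_poisson_general ℙ lam hlam X₁ X₂ hX₁ hX₂ hd₁ hd₂ hindep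
end

section
/- Let X ~ Gamma(α, λ) with shape α > 0 and rate λ > 0. Then the Gini coefficient of X equals Γ(2α+1)/(2^{2α} Γ(α+1)²). -/
/-!
By symmetry, `E|X₁ - X₂| = 2 E(X₁ - X₂)⁺`. With `c = λ^α / Γ(α)`, substituting `y = t x` in
`E(X₁ - X₂)⁺ = c² ∫∫_{0 < y < x} x^(α-1) y^(α-1) e^(-λ(x+y)) (x - y) dy dx` and integrating out `x`
first (a Gamma integral) gives
`c² Γ(2α+1) λ^(-(2α+1)) ∫₀¹ (1 - t) t^(α-1) (1 + t)^(-(2α+1)) dt`.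
The last integrand is the derivative of `t^α (1 + t)^(-2α) / α`, so the integral is `2^(-2α) / α`.
-/

open scoped ENNReal
open MeasureTheory ProbabilityTheory Real Set

lemma lintegral_eq_ofReal_abs_mul_lintegral_comp_mul_right {g : ℝ → ℝ≥0∞} (hg : Measurable g)
    {x : ℝ} (hx : x ≠ 0) : ∫⁻ y, g y = ENNReal.ofReal |x| * ∫⁻ t, g (t * x) := by
  conv_lhs => rw [← Real.smul_map_volume_mul_right hx]
  rw [lintegral_smul_measure, lintegral_map hg (measurable_mul_const x), smul_eq_mul]

lemma lintegral_rpow_mul_exp_neg_mul_Ioi {a r : ℝ} (ha : 0 < a) (hr : 0 < r) :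
    ∫⁻ x in Ioi 0, ENNReal.ofReal (x ^ (a - 1) * exp (-(r * x)))
      = ENNReal.ofReal ((1 / r) ^ a * Gamma a) := by
  have hval := integral_rpow_mul_exp_neg_mul_Ioi ha hr
  have hint : IntegrableOn (fun x : ℝ => x ^ (a - 1) * exp (-(r * x))) (Ioi 0) :=
    Integrable.of_integral_ne_zero (by rw [hval]; positivity)
  rw [← hval, ofReal_integral_eq_lintegral_ofReal hint]
  filter_upwards [ae_restrict_mem measurableSet_Ioi] with x (hx : 0 < x)
  positivity

lemma lintegral_Ioo_ofReal_deriv_of_nonneg {g g' : ℝ → ℝ} {a b : ℝ} (hab : a ≤ b)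
    (hcont : ContinuousOn g (Icc a b)) (hderiv : ∀ x ∈ Ioo a b, HasDerivAt g (g' x) x)
    (hpos : ∀ x ∈ Ioo a b, 0 ≤ g' x) :
    ∫⁻ x in Ioo a b, ENNReal.ofReal (g' x) = ENNReal.ofReal (g b - g a) := by
  have hint : IntegrableOn g' (Ioc a b) :=
    intervalIntegral.integrableOn_deriv_of_nonneg hcont hderiv hpos
  rw [← ofReal_integral_eq_lintegral_ofReal (hint.mono_set Ioo_subset_Ioc_self)
    ((ae_restrict_iff' measurableSet_Ioo).mpr (ae_of_all _ hpos)), ← integral_Ioc_eq_integral_Ioo,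
    ← intervalIntegral.integral_of_le hab,
    intervalIntegral.integral_eq_sub_of_hasDerivAt_of_le hab hcont hderiv
      ((intervalIntegrable_iff_integrableOn_Ioc_of_le hab).mpr hint)]

lemma hasDerivAt_rpow_mul_one_add_rpow {α t : ℝ} (hα : 0 < α) (ht : 0 < t) :
    HasDerivAt (fun s : ℝ => s ^ α * (1 + s) ^ (-(2 * α)) / α)
      ((1 - t) * t ^ (α - 1) * (1 + t) ^ (-(2 * α + 1))) t := by
  have h1t : 0 < 1 + t := by linarith
  have hprod := (Real.hasDerivAt_rpow_const (p := α) (Or.inl ht.ne')).mul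
    (((hasDerivAt_id t).const_add 1).rpow_const (p := -(2 * α)) (Or.inl h1t.ne'))
  refine (hprod.div_const α).congr_deriv ?_
  have e1 : t ^ α = t ^ (α - 1) * t := by rw [← rpow_add_one ht.ne']; ring_nf
  have e2 : (1 + t) ^ (-(2 * α)) = (1 + t) ^ (-(2 * α + 1)) * (1 + t) := by
    rw [← rpow_add_one h1t.ne']; ring_nf
  have e3 : (1 + t) ^ (-(2 * α) - 1) = (1 + t) ^ (-(2 * α + 1)) := by ring_nf
  simp only [id, e1, e2, e3]
  field_simp
  ring

lemma lintegral_Ioo_one_sub_mul_rpow_mul_one_add_rpow {α : ℝ} (hα : 0 < α) :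
    ∫⁻ t in Ioo 0 1, ENNReal.ofReal ((1 - t) * t ^ (α - 1) * (1 + t) ^ (-(2 * α + 1)))
      = ENNReal.ofReal (2 ^ (-(2 * α)) / α) := by
  have hcont : ContinuousOn (fun s : ℝ => s ^ α * (1 + s) ^ (-(2 * α)) / α) (Icc 0 1) := by
    refine ((continuousOn_id.rpow_const fun _ _ => Or.inr hα.le).mul ?_).div_const α
    exact ContinuousOn.rpow_const (f := fun s => 1 + s) (by fun_prop)
      fun s hs => Or.inl (by linarith [hs.1])
  have hpos : ∀ t ∈ Ioo (0 : ℝ) 1, 0 ≤ (1 - t) * t ^ (α - 1) * (1 + t) ^ (-(2 * α + 1)) := by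
    rintro t ⟨ht₀, ht₁⟩
    have : 0 ≤ 1 - t := by linarith
    positivity
  rw [lintegral_Ioo_ofReal_deriv_of_nonneg zero_le_one hcont
    (fun t ht => hasDerivAt_rpow_mul_one_add_rpow hα ht.1) hpos]
  norm_num [zero_rpow hα.ne']

lemma lintegral_prod_withDensity {E F : Type*} [MeasurableSpace E] [MeasurableSpace F]
    {μ : Measure E} {ν : Measure F} [SFinite μ] [SFinite ν] {f : E → ℝ≥0∞} {g : F → ℝ≥0∞}
    (hf : Measurable f) (hg : Measurable g) {h : E × F → ℝ≥0∞} (hh : Measurable h) :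
    ∫⁻ p, h p ∂((μ.withDensity f).prod (ν.withDensity g))
      = ∫⁻ x, ∫⁻ y, f x * g y * h (x, y) ∂ν ∂μ := by
  rw [prod_withDensity hf hg, lintegral_withDensity_eq_lintegral_mul _ (by fun_prop) hh,
    lintegral_prod _ (by fun_prop)]
  rfl

lemma ofReal_abs_eq_ofReal_add_ofReal_neg (a : ℝ) :
    ENNReal.ofReal |a| = ENNReal.ofReal a + ENNReal.ofReal (-a) := by
  rcases le_total 0 a with ha | ha
  · rw [abs_of_nonneg ha, ENNReal.ofReal_of_nonpos (neg_nonpos.mpr ha), add_zero]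
  · rw [abs_of_nonpos ha, ENNReal.ofReal_of_nonpos ha, zero_add]

lemma lintegral_ofReal_abs_sub_prod_self (μ : Measure ℝ) [SFinite μ] :
    ∫⁻ p, ENNReal.ofReal |p.1 - p.2| ∂(μ.prod μ)
      = 2 * ∫⁻ p, ENNReal.ofReal (p.1 - p.2) ∂(μ.prod μ) := by
  simp_rw [ofReal_abs_eq_ofReal_add_ofReal_neg, neg_sub]
  rw [lintegral_add_left (by fun_prop), two_mul]
  congr 1
  exact lintegral_prod_swap (fun p : ℝ × ℝ => ENNReal.ofReal (p.1 - p.2))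

lemma integral_abs_sub_eq_two_mul_toReal_lintegral {Ω : Type*} [MeasurableSpace Ω]
    {P : Measure Ω} [IsFiniteMeasure P] {μ : Measure ℝ} {X₁ X₂ : Ω → ℝ}
    (hX₁ : AEMeasurable X₁ P) (hX₂ : AEMeasurable X₂ P) (hd₁ : P.map X₁ = μ) (hd₂ : P.map X₂ = μ)
    (hindep : IndepFun X₁ X₂ P) :
    ∫ ω, |X₁ ω - X₂ ω| ∂P = 2 * (∫⁻ p, ENNReal.ofReal (p.1 - p.2) ∂(μ.prod μ)).toReal := by
  have hmap : P.map (fun ω => (X₁ ω, X₂ ω)) = μ.prod μ := by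
    rw [hindep.map_prod_eq_prod_map_map hX₁ hX₂, hd₁, hd₂]
  subst hd₁
  have habs : Continuous fun p : ℝ × ℝ => |p.1 - p.2| := by fun_prop
  calc ∫ ω, |X₁ ω - X₂ ω| ∂P
      = ∫ p, |p.1 - p.2| ∂(P.map (fun ω => (X₁ ω, X₂ ω))) :=
        (integral_map (hX₁.prodMk hX₂) habs.aestronglyMeasurable).symm
    _ = 2 * (∫⁻ p, ENNReal.ofReal (p.1 - p.2) ∂((P.map X₁).prod (P.map X₁))).toReal := by
        rw [hmap, integral_eq_lintegral_of_nonneg_ae (ae_of_all _ fun _ => abs_nonneg _)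
          habs.aestronglyMeasurable, lintegral_ofReal_abs_sub_prod_self, ENNReal.toReal_mul]
        norm_num

@[fun_prop]
lemma measurable_gammaPDF (a r : ℝ) : Measurable (gammaPDF a r) :=
  (measurable_gammaPDFReal a r).ennreal_ofReal

/-- The integrand of `E(X₁ - X₂)⁺` after the substitution `y = t x`, without the factor
`(λ^α / Γ(α))²`. -/
noncomputable def gammaDiffKernel (α lam x t : ℝ) : ℝ :=
  x ^ (2 * α) * exp (-(lam * (1 + t) * x)) * ((1 - t) * t ^ (α - 1))

lemma lintegral_gammaPDF_mul_gammaPDF_mul_ofReal_sub {α lam x : ℝ} (hα : 0 < α) (hlam : 0 < lam)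
    (hx : 0 < x) :
    ∫⁻ y, gammaPDF α lam x * gammaPDF α lam y * ENNReal.ofReal (x - y)
      = ENNReal.ofReal ((lam ^ α / Gamma α) ^ 2) *
          ∫⁻ t in Ioo 0 1, ENNReal.ofReal (gammaDiffKernel α lam x t) := by
  have hsupp : (fun t => ENNReal.ofReal x *
      (gammaPDF α lam x * gammaPDF α lam (t * x) * ENNReal.ofReal (x - t * x))).support
        ⊆ Icc 0 1 := by
    refine Function.support_subset_iff'.mpr fun t ht => ?_
    rcases not_and_or.mp ht with ht | ht
    · rw [gammaPDF_of_neg (mul_neg_of_neg_of_pos (not_le.mp ht) hx)]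
      simp
    · rw [ENNReal.ofReal_of_nonpos (show x - t * x ≤ 0 by
        nlinarith [mul_pos (sub_pos.mpr (not_le.mp ht)) hx])]
      simp
  rw [lintegral_eq_ofReal_abs_mul_lintegral_comp_mul_right (by fun_prop) hx.ne', abs_of_pos hx,
    ← lintegral_const_mul' _ _ ENNReal.ofReal_ne_top,
    ← lintegral_const_mul' _ _ ENNReal.ofReal_ne_top,
    ← setLIntegral_eq_of_support_subset hsupp, setLIntegral_congr Ioo_ae_eq_Icc.symm]
  refine setLIntegral_congr_fun measurableSet_Ioo fun t ⟨ht₀, ht₁⟩ => ?_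
  have htx : 0 ≤ t * x := by positivity
  rw [gammaPDF_of_nonneg hx.le, gammaPDF_of_nonneg htx, ← ENNReal.ofReal_mul (by positivity),
    ← ENNReal.ofReal_mul (by positivity), ← ENNReal.ofReal_mul (by positivity),
    ← ENNReal.ofReal_mul (by positivity)]
  congr 1
  have hpow : x ^ (2 * α) = x ^ (α - 1) * x ^ (α - 1) * x ^ 2 := by
    rw [← rpow_add hx, ← rpow_natCast, ← rpow_add hx]
    ring_nf
  have hexp : exp (-(lam * (1 + t) * x)) = exp (-(lam * x)) * exp (-(lam * (t * x))) := by
    rw [← exp_add]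
    ring_nf
  rw [gammaDiffKernel, mul_rpow ht₀.le hx.le, hpow, hexp]
  ring

lemma lintegral_Ioi_gammaDiffKernel {α lam t : ℝ} (hα : 0 < α) (hlam : 0 < lam)
    (ht : t ∈ Ioo 0 1) :
    ∫⁻ x in Ioi 0, ENNReal.ofReal (gammaDiffKernel α lam x t)
      = ENNReal.ofReal (Gamma (2 * α + 1) * (1 / lam) ^ (2 * α + 1)) *
          ENNReal.ofReal ((1 - t) * t ^ (α - 1) * (1 + t) ^ (-(2 * α + 1))) := by
  obtain ⟨ht₀, ht₁⟩ := ht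
  have h1t : 0 < 1 + t := by linarith
  have hweight : 0 ≤ (1 - t) * t ^ (α - 1) := mul_nonneg (by linarith) (by positivity)
  simp_rw [gammaDiffKernel, ENNReal.ofReal_mul' hweight]
  rw [lintegral_mul_const' _ _ ENNReal.ofReal_ne_top, ← add_sub_cancel_right (2 * α) 1,
    lintegral_rpow_mul_exp_neg_mul_Ioi (by linarith) (by positivity), add_sub_cancel_right,
    ← ENNReal.ofReal_mul (by positivity), ← ENNReal.ofReal_mul (by positivity)]
  congr 1
  have hsplit : (1 / (lam * (1 + t))) ^ (2 * α + 1)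
      = (1 / lam) ^ (2 * α + 1) * (1 + t) ^ (-(2 * α + 1)) := by
    rw [one_div, mul_inv, mul_rpow (inv_nonneg.mpr hlam.le) (inv_nonneg.mpr h1t.le),
      inv_rpow h1t.le, ← rpow_neg h1t.le, one_div]
  rw [hsplit]
  ring

lemma lintegral_ofReal_sub_gammaMeasure_prod {α lam : ℝ} (hα : 0 < α) (hlam : 0 < lam) :
    ∫⁻ p, ENNReal.ofReal (p.1 - p.2) ∂((gammaMeasure α lam).prod (gammaMeasure α lam))
      = ENNReal.ofReal (Gamma (2 * α + 1) / (2 ^ (2 * α) * Gamma (α + 1) ^ 2) * (α / lam)) := by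
  set c : ℝ := lam ^ α / Gamma α
  set K : ℝ → ℝ → ℝ≥0∞ := fun x t => ENNReal.ofReal (gammaDiffKernel α lam x t)
  have hsupp :
      (fun x => ∫⁻ y, gammaPDF α lam x * gammaPDF α lam y * ENNReal.ofReal (x - y)).support
        ⊆ Ioi 0 := by
    refine Function.support_subset_iff'.mpr fun x (hx : ¬ 0 < x) => ?_
    refine (lintegral_congr fun y => ?_).trans lintegral_zero
    rcases lt_or_ge y 0 with hy | hy
    · rw [gammaPDF_of_neg hy, mul_zero, zero_mul]
    · rw [ENNReal.ofReal_of_nonpos (show x - y ≤ 0 by linarith [not_lt.mp hx]), mul_zero]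
  calc _ = ∫⁻ x, ∫⁻ y, gammaPDF α lam x * gammaPDF α lam y * ENNReal.ofReal (x - y) :=
        lintegral_prod_withDensity (measurable_gammaPDF α lam) (measurable_gammaPDF α lam)
          (by fun_prop)
    _ = ∫⁻ x in Ioi 0, ENNReal.ofReal (c ^ 2) * ∫⁻ t in Ioo 0 1, K x t := by
        rw [← setLIntegral_eq_of_support_subset hsupp]
        exact setLIntegral_congr_fun measurableSet_Ioi fun x hx =>
          lintegral_gammaPDF_mul_gammaPDF_mul_ofReal_sub hα hlam hx
    _ = ENNReal.ofReal (c ^ 2) * ∫⁻ t in Ioo 0 1, ∫⁻ x in Ioi 0, K x t := by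
        rw [lintegral_const_mul' _ _ ENNReal.ofReal_ne_top,
          lintegral_lintegral_swap (by unfold K gammaDiffKernel; fun_prop)]
    _ = ENNReal.ofReal (c ^ 2) * ∫⁻ t in Ioo 0 1,
          ENNReal.ofReal (Gamma (2 * α + 1) * (1 / lam) ^ (2 * α + 1)) *
            ENNReal.ofReal ((1 - t) * t ^ (α - 1) * (1 + t) ^ (-(2 * α + 1))) := by
        congr 1
        exact setLIntegral_congr_fun measurableSet_Ioo fun t ht =>
          lintegral_Ioi_gammaDiffKernel hα hlam ht
    _ = ENNReal.ofReal (c ^ 2 * (Gamma (2 * α + 1) * (1 / lam) ^ (2 * α + 1) *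
          (2 ^ (-(2 * α)) / α))) := by
        rw [lintegral_const_mul' _ _ ENNReal.ofReal_ne_top,
          lintegral_Ioo_one_sub_mul_rpow_mul_one_add_rpow hα,
          ← ENNReal.ofReal_mul (by positivity), ← ENNReal.ofReal_mul (by positivity)]
    _ = _ := by
        congr 1
        have hc : c ^ 2 = lam ^ (2 * α) / Gamma α ^ 2 := by
          rw [div_pow, ← rpow_natCast, ← rpow_mul hlam.le, mul_comm]
          norm_num
        rw [hc, one_div, inv_rpow hlam.le, rpow_add hlam, rpow_one, rpow_neg zero_le_two,
          Gamma_add_one hα.ne']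
        have := Gamma_pos_of_pos hα
        field_simp

theorem gini_gamma
    {Ω : Type*} [MeasurableSpace Ω] (P : Measure Ω) [IsProbabilityMeasure P]
    (α lam : ℝ) (hα : 0 < α) (hlam : 0 < lam)
    (X₁ X₂ : Ω → ℝ) (hX₁ : Measurable X₁) (hX₂ : Measurable X₂)
    (hd₁ : Measure.map X₁ P = gammaMeasure α lam)
    (hd₂ : Measure.map X₂ P = gammaMeasure α lam)
    (hindep : IndepFun X₁ X₂ P) :
    (∫ ω, |X₁ ω - X₂ ω| ∂P) / (2 * (α / lam))
      = Real.Gamma (2 * α + 1) / (2 ^ (2 * α) * (Real.Gamma (α + 1)) ^ 2) := by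
  rw [integral_abs_sub_eq_two_mul_toReal_lintegral hX₁.aemeasurable hX₂.aemeasurable hd₁ hd₂
    hindep, lintegral_ofReal_sub_gammaMeasure_prod hα hlam, ENNReal.toReal_ofReal (by positivity)]
  field_simp
end

section
/- Let g: (0,∞) → (0,∞) be a twice continuously differentiable probability density such that x² (log g(x))'' is constant on (0,∞), equal to some C ∈ ℝ. Then there exist constants K, D with g(x) = e^K x^{-C} e^{Dx}; integrability of g on (0,∞) forces C < 1 and D < 0, so that g is a Gamma density with shape α = 1 - C > 0 and rate λ = -D > 0. -/
open MeasureTheory Set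

/-!
With `f = log g`, the hypothesis says `(f')' = C / x²`, so `f' = -C / x + D` and
`f = K - C log x + D x`, i.e. `g = e^K x^(-C) e^(D x)`. Integrability of `x^(-C) e^(D x)` near `∞`
forces `D < 0`, near `0` it forces `-C > -1`, and then `∫ g = e^K Γ(1 - C) / (-D)^(1 - C) = 1`
pins down `e^K`.
-/

namespace Real

theorem exists_eqOn_neg_mul_inv_add_of_sq_mul_deriv_eq {u : ℝ → ℝ} {C : ℝ}
    (hu : DifferentiableOn ℝ u (Ioi 0)) (hC : ∀ x ∈ Ioi (0:ℝ), x ^ 2 * deriv u x = C) :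
    ∃ D : ℝ, EqOn u (fun x => -C * x⁻¹ + D) (Ioi 0) := by
  have hinv : DifferentiableOn ℝ (fun x : ℝ => -C * x⁻¹) (Ioi 0) :=
    (differentiableOn_inv.mono fun _ hx => (mem_Ioi.1 hx).ne').const_mul _
  refine isOpen_Ioi.exists_eq_add_of_deriv_eq isPreconnected_Ioi hu hinv fun x hx => ?_
  have hx0 : x ≠ 0 := (mem_Ioi.1 hx).ne'
  rw [deriv_const_mul _ (differentiableAt_inv hx0), deriv_inv, eq_comm, ← hC x hx]
  field_simp

theorem exists_eqOn_log_add_of_deriv_eqOn {f : ℝ → ℝ} {C D : ℝ}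
    (hf : DifferentiableOn ℝ f (Ioi 0)) (hf' : EqOn (deriv f) (fun x => -C * x⁻¹ + D) (Ioi 0)) :
    ∃ K : ℝ, EqOn f (fun x => K + -C * log x + D * x) (Ioi 0) := by
  have hlog : ∀ x ∈ Ioi (0:ℝ), HasDerivAt (fun x => -C * log x + D * x) (-C * x⁻¹ + D) x :=
    fun x hx => by
      simpa using ((hasDerivAt_log (mem_Ioi.1 hx).ne').const_mul (-C)).fun_add
        ((hasDerivAt_id x).const_mul D)
  obtain ⟨K, hK⟩ := isOpen_Ioi.exists_eq_add_of_deriv_eq isPreconnected_Ioi hf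
    (fun x hx => (hlog x hx).differentiableAt.differentiableWithinAt)
    fun x hx => (hf' hx).trans (hlog x hx).deriv.symm
  exact ⟨K, fun x hx => (hK hx).trans (by ring)⟩

theorem exists_eqOn_of_sq_mul_deriv_deriv_eq {f : ℝ → ℝ} {C : ℝ}
    (hf : ContDiffOn ℝ 2 f (Ioi 0)) (hC : ∀ x ∈ Ioi (0:ℝ), x ^ 2 * deriv (deriv f) x = C) :
    ∃ K D : ℝ, EqOn f (fun x => K + -C * log x + D * x) (Ioi 0) := by
  have hf' : ContDiffOn ℝ 1 (deriv f) (Ioi 0) := hf.deriv_of_isOpen isOpen_Ioi (by norm_num)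
  obtain ⟨D, hD⟩ :=
    exists_eqOn_neg_mul_inv_add_of_sq_mul_deriv_eq (hf'.differentiableOn one_ne_zero) hC
  obtain ⟨K, hK⟩ := exists_eqOn_log_add_of_deriv_eqOn (hf.differentiableOn (by norm_num)) hD
  exact ⟨K, D, hK⟩

theorem neg_of_integrableOn_rpow_mul_exp_Ioi {s D : ℝ}
    (h : IntegrableOn (fun x => x ^ s * exp (D * x)) (Ioi 0)) : D < 0 := by
  by_contra! hD
  refine not_integrableOn_Ioi_rpow s (h.mono' ?_ ?_)
  · exact (continuousOn_id.rpow_const fun x hx => Or.inl (mem_Ioi.1 hx).ne').aestronglyMeasurable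
      measurableSet_Ioi
  · filter_upwards [ae_restrict_mem measurableSet_Ioi] with x hx
    have hxs : 0 ≤ x ^ s := rpow_nonneg (mem_Ioi.1 hx).le s
    rw [norm_of_nonneg hxs]
    exact le_mul_of_one_le_right hxs (one_le_exp (mul_nonneg hD (mem_Ioi.1 hx).le))

theorem neg_one_lt_of_integrableOn_rpow_mul_exp_Ioi {s D : ℝ}
    (h : IntegrableOn (fun x => x ^ s * exp (D * x)) (Ioi 0)) : -1 < s := by
  have hIoo : IntegrableOn (fun x => x ^ s * exp (D * x) * exp (-D * x)) (Ioo 0 1) :=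
    (h.mono_set Ioo_subset_Ioi_self).mul_continuousOn_of_subset (by fun_prop) measurableSet_Ioo
      isCompact_Icc Ioo_subset_Icc_self
  have : IntegrableOn (fun x : ℝ => x ^ s) (Ioo 0 1) := by
    refine hIoo.congr_fun (fun x _ => ?_) measurableSet_Ioo
    dsimp only
    rw [mul_assoc, ← exp_add, neg_mul, add_neg_cancel, exp_zero, mul_one]
  exact (intervalIntegral.integrableOn_Ioo_rpow_iff zero_lt_one).1 this

theorem integral_rpow_mul_exp_Ioi {s D : ℝ} (hs : -1 < s) (hD : D < 0) :
    ∫ x in Ioi 0, x ^ s * exp (D * x) = Gamma (s + 1) / (-D) ^ (s + 1) := by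
  have := integral_rpow_mul_exp_neg_mul_Ioi (a := s + 1) (by linarith) (neg_pos.2 hD)
  simp only [add_sub_cancel_right, neg_mul, neg_neg, one_div, inv_rpow (neg_pos.2 hD).le] at this
  rw [this, div_eq_inv_mul]

end Real

theorem log_second_deriv_const_implies_gamma
    (g : ℝ → ℝ) (hgpos : ∀ x ∈ Ioi (0:ℝ), 0 < g x)
    (hsmooth : ContDiffOn ℝ 2 g (Ioi 0))
    (hdens : ∫ x in Ioi (0:ℝ), g x = 1)
    (hint : IntegrableOn g (Ioi 0))
    (C : ℝ)
    (hC : ∀ x ∈ Ioi (0:ℝ),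
      x ^ 2 * deriv (deriv (fun y => Real.log (g y))) x = C) :
    ∃ K D : ℝ, (∀ x ∈ Ioi (0:ℝ), g x = Real.exp K * x ^ (-C) * Real.exp (D * x))
      ∧ C < 1 ∧ D < 0
      ∧ Real.exp K = (-D) ^ (1 - C) / Real.Gamma (1 - C) := by
  obtain ⟨K, D, hlog⟩ := Real.exists_eqOn_of_sq_mul_deriv_deriv_eq
    (hsmooth.log fun x hx => (hgpos x hx).ne') hC
  have hg : ∀ x ∈ Ioi (0:ℝ), g x = Real.exp K * (x ^ (-C) * Real.exp (D * x)) := fun x hx => by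
    rw [← Real.exp_log (hgpos x hx), show Real.log (g x) = _ from hlog hx, Real.exp_add,
      Real.exp_add, Real.rpow_def_of_pos hx, mul_comm (Real.log x), mul_assoc]
  have hkernel : IntegrableOn (fun x => x ^ (-C) * Real.exp (D * x)) (Ioi 0) := by
    refine IntegrableOn.congr_fun (hint.const_mul (Real.exp (-K))) (fun x hx => ?_)
      measurableSet_Ioi
    rw [hg x hx, ← mul_assoc, ← Real.exp_add, neg_add_cancel, Real.exp_zero, one_mul]
  have hC1 : C < 1 := by linarith [Real.neg_one_lt_of_integrableOn_rpow_mul_exp_Ioi hkernel]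
  have hD := Real.neg_of_integrableOn_rpow_mul_exp_Ioi hkernel
  refine ⟨K, D, fun x hx => (hg x hx).trans (mul_assoc _ _ _).symm, hC1, hD, ?_⟩
  have hnorm := hdens
  rw [setIntegral_congr_fun measurableSet_Ioi hg, integral_const_mul,
    Real.integral_rpow_mul_exp_Ioi (by linarith) hD, neg_add_eq_sub] at hnorm
  have hΓ : 0 < Real.Gamma (1 - C) := Real.Gamma_pos_of_pos (by linarith)
  have hr : 0 < (-D) ^ (1 - C) := Real.rpow_pos_of_pos (neg_pos.2 hD) _
  rw [mul_div_assoc', div_eq_one_iff_eq hr.ne'] at hnorm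
  rwa [eq_div_iff hΓ.ne']
end

section
/- Let n ≥ 1 and p ∈ (0,1), and set E_n(p) = n p^n ∫₀^{1-p} dw/((1-w)^{n+1}(1+w)). Then (1-p^n)/(2-p) ≤ E_n(p) ≤ 1 - p^n. In particular, for X ~ Geometric(p) with Gini coefficient G = 1/(2-p), the expectation of the Gini estimator from a sample of size n satisfies -p^n G ≤ E[Ĝ] - G ≤ 1 - p^n - G. -/
/-!
The weight `n p^n (1 - w)^{-(n+1)}` is the derivative of `p^n (1 - w)^{-n}`, so its total mass
on `[0, 1 - p]` is `1 - p^n`. The integrand of `E_n(p)` is this weight times `1 / (1 + w)`, and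
that factor lies in `[1 / (2 - p), 1]` on `[0, 1 - p]`.
-/

open MeasureTheory Set

section WeightedIntegral

variable {f h : ℝ → ℝ} {a b c : ℝ}

theorem const_mul_integral_le_integral_mul (hab : a ≤ b) (hf : IntervalIntegrable f volume a b)
    (hfh : IntervalIntegrable (fun x => f x * h x) volume a b)
    (hf0 : ∀ x ∈ Icc a b, 0 ≤ f x) (hc : ∀ x ∈ Icc a b, c ≤ h x) :
    c * ∫ x in a..b, f x ≤ ∫ x in a..b, f x * h x := by
  rw [← intervalIntegral.integral_const_mul]
  refine intervalIntegral.integral_mono_on hab (hf.const_mul c) hfh fun x hx => ?_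
  rw [mul_comm]
  exact mul_le_mul_of_nonneg_left (hc x hx) (hf0 x hx)

theorem integral_mul_le_const_mul_integral (hab : a ≤ b) (hf : IntervalIntegrable f volume a b)
    (hfh : IntervalIntegrable (fun x => f x * h x) volume a b)
    (hf0 : ∀ x ∈ Icc a b, 0 ≤ f x) (hc : ∀ x ∈ Icc a b, h x ≤ c) :
    ∫ x in a..b, f x * h x ≤ c * ∫ x in a..b, f x := by
  rw [← intervalIntegral.integral_const_mul]
  refine intervalIntegral.integral_mono_on hab hfh (hf.const_mul c) fun x hx => ?_
  rw [mul_comm c]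
  exact mul_le_mul_of_nonneg_left (hc x hx) (hf0 x hx)

end WeightedIntegral

theorem hasDerivAt_inv_one_sub_pow (n : ℕ) {w : ℝ} (hw : w ≠ 1) :
    HasDerivAt (fun x : ℝ => ((1 - x) ^ n)⁻¹) (n * ((1 - w) ^ (n + 1))⁻¹) w := by
  have hw' : 1 - w ≠ 0 := sub_ne_zero.mpr hw.symm
  refine ((((hasDerivAt_id w).const_sub 1).fun_pow n).inv (pow_ne_zero n hw')).congr_deriv ?_
  rcases n with _ | k
  · simp
  · simp only [id, Nat.add_sub_cancel]
    field_simp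
    ring

theorem continuousOn_inv_one_sub_pow (n : ℕ) {s : Set ℝ} (hs : ∀ w ∈ s, w < 1) :
    ContinuousOn (fun w : ℝ => ((1 - w) ^ n)⁻¹) s :=
  ContinuousOn.inv₀ (by fun_prop) fun w hw => pow_ne_zero _ (sub_ne_zero.mpr (hs w hw).ne')

theorem integral_natCast_mul_inv_one_sub_pow_succ (n : ℕ) {a b : ℝ} (ha : a < 1) (hb : b < 1) :
    ∫ w in a..b, n * ((1 - w) ^ (n + 1))⁻¹ = ((1 - b) ^ n)⁻¹ - ((1 - a) ^ n)⁻¹ := by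
  have hlt : ∀ w ∈ uIcc a b, w < 1 := fun w hw => hw.2.trans_lt (max_lt ha hb)
  refine intervalIntegral.integral_eq_sub_of_hasDerivAt
    (fun w hw => hasDerivAt_inv_one_sub_pow n (hlt w hw).ne) ?_
  exact (continuousOn_const.mul (continuousOn_inv_one_sub_pow (n + 1) hlt)).intervalIntegrable

theorem natCast_mul_pow_mul_integral_inv_one_sub_pow_succ (n : ℕ) {p : ℝ} (hp : 0 < p) :
    n * p ^ n * ∫ w in (0)..(1 - p), ((1 - w) ^ (n + 1))⁻¹ = 1 - p ^ n := by
  rw [mul_comm (n : ℝ), mul_assoc, ← intervalIntegral.integral_const_mul,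
    integral_natCast_mul_inv_one_sub_pow_succ n (by linarith) (by linarith), sub_sub_cancel,
    sub_zero, one_pow, inv_one, mul_sub, mul_inv_cancel₀ (by positivity), mul_one]

theorem integral_inv_one_sub_pow_mul_inv_one_add_mem_Icc (n : ℕ) {b : ℝ} (hb0 : 0 ≤ b)
    (hb1 : b < 1) :
    ∫ w in (0)..b, ((1 - w) ^ n)⁻¹ * (1 + w)⁻¹ ∈
      Icc ((1 + b)⁻¹ * ∫ w in (0)..b, ((1 - w) ^ n)⁻¹) (∫ w in (0)..b, ((1 - w) ^ n)⁻¹) := by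
  have hlt : ∀ w ∈ uIcc 0 b, w < 1 := fun w hw => hw.2.trans_lt (max_lt one_pos hb1)
  have hh : ContinuousOn (fun w : ℝ => (1 + w)⁻¹) (uIcc 0 b) :=
    ContinuousOn.inv₀ (by fun_prop) fun w hw => by linarith [le_min le_rfl hb0, hw.1]
  have hf := (continuousOn_inv_one_sub_pow n hlt).intervalIntegrable (μ := volume)
  have hfh := ((continuousOn_inv_one_sub_pow n hlt).mul hh).intervalIntegrable (μ := volume)
  have hf0 : ∀ w ∈ Icc 0 b, 0 ≤ ((1 - w) ^ n)⁻¹ := fun w hw =>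
    inv_nonneg.mpr (pow_nonneg (by linarith [hw.2]) _)
  constructor
  · exact const_mul_integral_le_integral_mul hb0 hf hfh hf0 fun w hw =>
      inv_anti₀ (by linarith [hw.1]) (by linarith [hw.2])
  · simpa using integral_mul_le_const_mul_integral hb0 hf hfh hf0 (c := 1) fun w hw =>
      inv_le_one_of_one_le₀ (by linarith [hw.1])

theorem geometric_gini_expectation_bounds_general (n : ℕ)
    (p : ℝ) (hp : p ∈ Ioo (0:ℝ) 1)
    (En : ℝ)
    (hEn : En = (n : ℝ) * p ^ n
        * ∫ w in Ioo (0:ℝ) (1 - p), 1 / ((1 - w) ^ (n + 1) * (1 + w))) :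
    ((1 - p ^ n) / (2 - p) ≤ En ∧ En ≤ 1 - p ^ n)
    ∧ (-(p ^ n) * (1 / (2 - p)) ≤ En - 1 / (2 - p)
        ∧ En - 1 / (2 - p) ≤ 1 - p ^ n - 1 / (2 - p)) := by
  obtain ⟨hp0, hp1⟩ := hp
  have hb : (0 : ℝ) ≤ 1 - p := by linarith
  have hEn' : En = n * p ^ n * ∫ w in (0)..(1 - p), ((1 - w) ^ (n + 1))⁻¹ * (1 + w)⁻¹ := by
    simp only [hEn, intervalIntegral.integral_of_le hb, integral_Ioc_eq_integral_Ioo, one_div,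
      mul_inv]
  obtain ⟨hlo, hhi⟩ := integral_inv_one_sub_pow_mul_inv_one_add_mem_Icc (n + 1) hb (by linarith)
  rw [show 1 + (1 - p) = 2 - p by ring] at hlo
  have hc : (0 : ℝ) ≤ n * p ^ n := by positivity
  have hlo' := mul_le_mul_of_nonneg_left hlo hc
  have hhi' := mul_le_mul_of_nonneg_left hhi hc
  rw [mul_left_comm, natCast_mul_pow_mul_integral_inv_one_sub_pow_succ n hp0, ← hEn'] at hlo'
  rw [natCast_mul_pow_mul_integral_inv_one_sub_pow_succ n hp0, ← hEn'] at hhi'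
  simp only [div_eq_inv_mul, mul_one]
  refine ⟨⟨?_, ?_⟩, ?_, ?_⟩ <;> linarith

theorem geometric_gini_expectation_bounds (n : ℕ) (hn : 1 ≤ n)
    (p : ℝ) (hp : p ∈ Ioo (0:ℝ) 1)
    (En : ℝ)
    (hEn : En = (n : ℝ) * p ^ n
        * ∫ w in Ioo (0:ℝ) (1 - p), 1 / ((1 - w) ^ (n + 1) * (1 + w))) :
    ((1 - p ^ n) / (2 - p) ≤ En ∧ En ≤ 1 - p ^ n)
    ∧ (-(p ^ n) * (1 / (2 - p)) ≤ En - 1 / (2 - p)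
        ∧ En - 1 / (2 - p) ≤ 1 - p ^ n - 1 / (2 - p)) :=
  geometric_gini_expectation_bounds_general n p hp En hEn
end
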